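/- Let ρ₁ and ρ₂ be Borel probability measures on ℝ with ρ₁ ≠ ρ₂. Then the associated position observables on L²(ℝ) differ: there exists a Borel set X ⊆ ℝ such that E_{ρ₁}(X) ≠ E_{ρ₂}(X), where (E_{ρᵢ}(X)f)(x) = ρᵢ(X − x)f(x). -/
import Mathlib


open MeasureTheory Complex

noncomputable section

/-- `L²(ℝ)` with Lebesgue measure. -/
abbrev L2 : Type := Lp ℂ 2 (volume : Measure ℝ)

/-- `T` is the operator of multiplication by the bounded function `x ↦ ρ(X − x)`. -/
def IsMulByMeas (ρ : Measure ℝ) (X : Set ℝ) (T : L2 →L[ℂ] L2) : Prop :=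
  ∀ f : L2, (T f : ℝ → ℂ) =ᵐ[volume]
    fun x => ((ρ ((· + x) ⁻¹' X)).toReal : ℂ) * (f : ℝ → ℂ) x

/-- if `ρ₁ ≠ ρ₂` then the associated position observables differ. -/
theorem stmt2 (ρ₁ ρ₂ : Measure ℝ) [IsProbabilityMeasure ρ₁] [IsProbabilityMeasure ρ₂]
    (h : ρ₁ ≠ ρ₂)
    (E₁ E₂ : Set ℝ → (L2 →L[ℂ] L2))
    (hE₁ : ∀ X : Set ℝ, MeasurableSet X → IsMulByMeas ρ₁ X (E₁ X))
    (hE₂ : ∀ X : Set ℝ, MeasurableSet X → IsMulByMeas ρ₂ X (E₂ X)) :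
    ∃ X : Set ℝ, MeasurableSet X ∧ E₁ X ≠ E₂ X := by
  by_contra hc
  push_neg at hc
  apply h
  have hX : MeasurableSet (Set.Iic (0:ℝ)) := measurableSet_Iic
  have hpre : ∀ x : ℝ, (· + x) ⁻¹' Set.Iic (0:ℝ) = Set.Iic (-x) := by
    intro x
    ext y
    simp only [Set.mem_preimage, Set.mem_Iic]
    constructor <;> intro hy <;> linarith
  -- For each n, a.e. x in Ioo (-n) n, the two CDF values at -x agree.
  have hn : ∀ n : ℕ, ∀ᵐ x : ℝ, x ∈ Set.Ioo (-(n:ℝ)) n →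
      ρ₁ (Set.Iic (-x)) = ρ₂ (Set.Iic (-x)) := by
    intro n
    have hIoo : MeasurableSet (Set.Ioo (-(n:ℝ)) n) := measurableSet_Ioo
    have hvol : volume (Set.Ioo (-(n:ℝ)) n) ≠ ⊤ := by
      rw [Real.volume_Ioo]; exact ENNReal.ofReal_ne_top
    set f : L2 := indicatorConstLp 2 hIoo hvol (1:ℂ) with hf
    have h1 := hE₁ _ hX f
    have h2 := hE₂ _ hX f
    rw [hc _ hX] at h1
    have h3 := h1.symm.trans h2
    have hind : (f : ℝ → ℂ) =ᵐ[volume] (Set.Ioo (-(n:ℝ)) n).indicator (fun _ => (1:ℂ)) :=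
      indicatorConstLp_coeFn
    filter_upwards [h3, hind] with x hx hfx hmem
    rw [hfx, Set.indicator_of_mem hmem, mul_one, mul_one, hpre x] at hx
    have := Complex.ofReal_inj.mp hx
    exact (ENNReal.toReal_eq_toReal_iff' (measure_ne_top _ _) (measure_ne_top _ _)).mp this
  have key : ∀ᵐ x : ℝ, ρ₁ (Set.Iic (-x)) = ρ₂ (Set.Iic (-x)) := by
    have := MeasureTheory.ae_all_iff.mpr hn
    filter_upwards [this] with x hx
    obtain ⟨n, hnx⟩ := exists_nat_gt |x|
    exact hx n ⟨neg_lt_of_abs_lt hnx, lt_of_abs_lt hnx⟩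
  -- The set of good CDF points has full measure.
  set T : Set ℝ := {s | ρ₁ (Set.Iic s) = ρ₂ (Set.Iic s)} with hT
  have hTc : volume Tᶜ = 0 := by
    have h1 : volume ((Neg.neg : ℝ → ℝ) ⁻¹' T)ᶜ = 0 := key
    have h2 : ((Neg.neg : ℝ → ℝ) ⁻¹' T)ᶜ = (Neg.neg : ℝ → ℝ) ⁻¹' Tᶜ := by
      ext y; simp
    rw [h2, Set.neg_preimage, Measure.measure_neg] at h1
    exact h1
  -- For every t, pick good points just above t.
  have hdense : ∀ t : ℝ, ∀ ε : ℝ, 0 < ε → ∃ s ∈ T, t < s ∧ s < t + ε := by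
    intro t ε hε
    by_contra hcon
    push_neg at hcon
    have hsub : Set.Ioo t (t + ε) ⊆ Tᶜ := by
      intro s hs hsT
      exact absurd (hcon s hsT hs.1) (not_le_of_gt hs.2)
    have : volume (Set.Ioo t (t + ε)) = 0 := measure_mono_null hsub hTc
    rw [Real.volume_Ioo] at this
    simp only [add_sub_cancel_left] at this
    exact absurd this (by simp [ENNReal.ofReal_eq_zero, not_le, hε])
  refine Measure.ext_of_Iic ρ₁ ρ₂ (fun t => ?_)
  -- choose a sequence of good points decreasing to t
  have hu : ∀ n : ℕ, ∃ s ∈ T, t < s ∧ s < t + 1 / (n + 1) := fun n =>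
    hdense t (1 / (n + 1)) (by positivity)
  choose u huT hut hulr using hu
  -- make it antitone
  let v : ℕ → ℝ := fun n => Nat.rec (u 0) (fun k vk => min (u (k + 1)) vk) n
  have hv0 : v 0 = u 0 := rfl
  have hvsucc : ∀ n, v (n + 1) = min (u (n + 1)) (v n) := fun n => rfl
  have hvT : ∀ n, v n ∈ T := by
    intro n
    induction n with
    | zero => exact huT 0
    | succ k ih =>
      rw [hvsucc]
      rcases min_choice (u (k + 1)) (v k) with hmin | hmin <;> rw [hmin]
      · exact huT (k + 1)
      · exact ih
  have hvt : ∀ n, t < v n := by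
    intro n
    induction n with
    | zero => exact hut 0
    | succ k ih => rw [hvsucc]; exact lt_min (hut (k + 1)) ih
  have hvle : ∀ n, v n ≤ u n := by
    intro n
    cases n with
    | zero => exact le_of_eq hv0
    | succ k => rw [hvsucc]; exact min_le_left _ _
  have hanti : Antitone v := antitone_nat_of_succ_le (fun n => by
    rw [hvsucc]; exact min_le_right _ _)
  have hiInter : ⋂ n, Set.Iic (v n) = Set.Iic t := by
    ext y
    simp only [Set.mem_iInter, Set.mem_Iic]
    constructor
    · intro hy
      by_contra hyt
      push_neg at hyt
      obtain ⟨n, hnlt⟩ := exists_nat_one_div_lt (sub_pos.mpr hyt)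
      have h1 : y ≤ v n := hy n
      have h2 : v n ≤ u n := hvle n
      have h3 : u n < t + 1 / (n + 1) := hulr n
      have : (1 : ℝ) / (n + 1) < y - t := hnlt
      linarith
    · intro hy n
      exact le_trans hy (le_of_lt (hvt n))
  have hAnti : Antitone (fun n => Set.Iic (v n)) := fun a b hab =>
    Set.Iic_subset_Iic.mpr (hanti hab)
  have e1 : ρ₁ (Set.Iic t) = ⨅ n, ρ₁ (Set.Iic (v n)) := by
    rw [← hiInter]
    exact hAnti.measure_iInter (fun n => measurableSet_Iic.nullMeasurableSet)
      ⟨0, measure_ne_top _ _⟩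
  have e2 : ρ₂ (Set.Iic t) = ⨅ n, ρ₂ (Set.Iic (v n)) := by
    rw [← hiInter]
    exact hAnti.measure_iInter (fun n => measurableSet_Iic.nullMeasurableSet)
      ⟨0, measure_ne_top _ _⟩
  rw [e1, e2]
  exact iInf_congr (fun n => hvT n)
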